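/- Assume a = 1/4 (with b, d, e ∈ ℝ arbitrary). Let u be a C³ solution of the Longstaff–Schwartz equation on Ω. Then the function w(x,y,t) = e^{-bt/2} · √x · ∂u/∂x(x,y,t) is also a solution of the Longstaff–Schwartz equation on Ω. -/

import Mathlib

/-- Partial derivative in `x`. -/
noncomputable def pdX (u : ℝ → ℝ → ℝ → ℝ) (x y t : ℝ) : ℝ := deriv (fun z => u z y t) x

/-- Partial derivative in `y`. -/
noncomputable def pdY (u : ℝ → ℝ → ℝ → ℝ) (x y t : ℝ) : ℝ := deriv (fun z => u x z t) y

/-- Partial derivative in `t`. -/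
noncomputable def pdT (u : ℝ → ℝ → ℝ → ℝ) (x y t : ℝ) : ℝ := deriv (fun z => u x y z) t

/-- Second partial derivative in `x`. -/
noncomputable def pdXX (u : ℝ → ℝ → ℝ → ℝ) (x y t : ℝ) : ℝ := deriv (fun z => pdX u z y t) x

/-- Second partial derivative in `y`. -/
noncomputable def pdYY (u : ℝ → ℝ → ℝ → ℝ) (x y t : ℝ) : ℝ := deriv (fun z => pdY u x z t) y

/-- The domain `Ω = {(x,y,t) : x > 0, y > 0}`. -/
def Omega : Set (ℝ × ℝ × ℝ) := {p | 0 < p.1 ∧ 0 < p.2.1}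

/-- The Longstaff–Schwartz (Kolmogorov backward) equation
`u_t = −((a−bx)·u_x + (d−ey)·u_y + (x/2)·u_xx + (y/2)·u_yy)` holds at the point `(x,y,t)`. -/
def LSEq (a b d e : ℝ) (u : ℝ → ℝ → ℝ → ℝ) (x y t : ℝ) : Prop :=
  pdT u x y t =
    -((a - b * x) * pdX u x y t + (d - e * y) * pdY u x y t +
      x / 2 * pdXX u x y t + y / 2 * pdYY u x y t)

/-- `u` is a solution of the Longstaff–Schwartz equation on `Ω`: it is C² on `Ω` and
satisfies the equation at every point of `Ω`. -/
def IsLSSolution (a b d e : ℝ) (u : ℝ → ℝ → ℝ → ℝ) : Prop :=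
  ContDiffOn ℝ 2 (fun p : ℝ × ℝ × ℝ => u p.1 p.2.1 p.2.2) Omega ∧
  ∀ x y t : ℝ, 0 < x → 0 < y → LSEq a b d e u x y t

/-!
Differentiating the equation in `x` shows that `v = u_x` solves the Longstaff–Schwartz equation
with `a` replaced by `a + 1/2`, up to an extra zeroth-order term `b v`. For `a = 1/4` the factor
`√x` brings the drift constant `3/4` back to `1/4` (the `v / x` terms that the drift and `x/2 · ∂ₓₓ`
produce from `√x` cancel), while `e^{-bt/2}` absorbs the term `b v` together with the `-b v / 2`
coming from `-b x · ∂ₓ√x`. Mixed partial derivatives commute because `u` is `C³` on the open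
set `Ω`.
-/

open Set

def uncurry3 (u : ℝ → ℝ → ℝ → ℝ) (p : ℝ × ℝ × ℝ) : ℝ := u p.1 p.2.1 p.2.2

theorem isOpen_Omega : IsOpen Omega :=
  (isOpen_lt continuous_const continuous_fst).inter
    (isOpen_lt continuous_const (continuous_fst.comp continuous_snd))

section GeneralDirection

variable {E : Type*} [NormedAddCommGroup E] [NormedSpace ℝ E] {U g g₁ g₂ : E → ℝ}
  {s : Set E}

theorem ContDiffOn.of_eqOn_fderiv_apply {n : ℕ} (hU : ContDiffOn ℝ (n + 1) U s) (hs : IsOpen s)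
    {v : E} (hg : EqOn g (fun q => fderiv ℝ U q v) s) : ContDiffOn ℝ n g s :=
  ((hU.fderiv_of_isOpen hs le_rfl).clm_apply contDiffOn_const).congr hg

theorem fderiv_apply_eq_of_eqOn_fderiv_apply (hU : ContDiffOn ℝ 2 U s) (hs : IsOpen s) {p v : E}
    (hp : p ∈ s) (hg : EqOn g (fun q => fderiv ℝ U q v) s) (w : E) :
    fderiv ℝ g p w = fderiv ℝ (fderiv ℝ U) p w v := by
  have hU' : DifferentiableAt ℝ (fderiv ℝ U) p :=
    ((hU.fderiv_of_isOpen hs (by norm_num : (1 : WithTop ℕ∞) + 1 ≤ 2)).differentiableOn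
      one_ne_zero).differentiableAt (hs.mem_nhds hp)
  rw [(hg.eventuallyEq_of_mem (hs.mem_nhds hp)).fderiv_eq,
    fderiv_clm_apply hU' (differentiableAt_const v)]
  simp

theorem fderiv_apply_comm_of_eqOn_fderiv_apply (hU : ContDiffOn ℝ 2 U s) (hs : IsOpen s)
    {p v w : E} (hp : p ∈ s) (hg₁ : EqOn g₁ (fun q => fderiv ℝ U q v) s)
    (hg₂ : EqOn g₂ (fun q => fderiv ℝ U q w) s) :
    fderiv ℝ g₁ p w = fderiv ℝ g₂ p v := by
  rw [fderiv_apply_eq_of_eqOn_fderiv_apply hU hs hp hg₁,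
    fderiv_apply_eq_of_eqOn_fderiv_apply hU hs hp hg₂]
  exact ((hU.contDiffAt (hs.mem_nhds hp)).isSymmSndFDerivAt (by simp)).eq w v

end GeneralDirection

section Coordinates

variable {u : ℝ → ℝ → ℝ → ℝ} {x y t : ℝ}

theorem hasDerivAt_pdX (hu : DifferentiableOn ℝ (uncurry3 u) Omega) (hx : 0 < x) (hy : 0 < y) :
    HasDerivAt (fun z => u z y t) (pdX u x y t) x :=
  ((hu.differentiableAt (isOpen_Omega.mem_nhds ⟨hx, hy⟩)).comp x
    ((differentiableAt_id).prodMk (differentiableAt_const (y, t)))).hasDerivAt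

theorem hasDerivAt_pdY (hu : DifferentiableOn ℝ (uncurry3 u) Omega) (hx : 0 < x) (hy : 0 < y) :
    HasDerivAt (fun z => u x z t) (pdY u x y t) y :=
  ((hu.differentiableAt (isOpen_Omega.mem_nhds ⟨hx, hy⟩)).comp y
    ((differentiableAt_const x).prodMk
      (differentiableAt_id.prodMk (differentiableAt_const t)))).hasDerivAt

theorem hasDerivAt_pdT (hu : DifferentiableOn ℝ (uncurry3 u) Omega) (hx : 0 < x) (hy : 0 < y) :
    HasDerivAt (fun z => u x y z) (pdT u x y t) t :=
  ((hu.differentiableAt (isOpen_Omega.mem_nhds ⟨hx, hy⟩)).comp t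
    ((differentiableAt_const x).prodMk
      ((differentiableAt_const y).prodMk differentiableAt_id))).hasDerivAt

theorem eqOn_pdX (hu : DifferentiableOn ℝ (uncurry3 u) Omega) :
    EqOn (uncurry3 (pdX u)) (fun q => fderiv ℝ (uncurry3 u) q (1, 0, 0)) Omega := by
  rintro ⟨x, y, t⟩ ⟨hx, hy⟩
  exact ((hu.differentiableAt (isOpen_Omega.mem_nhds ⟨hx, hy⟩)).hasFDerivAt.comp_hasDerivAt x
    ((hasDerivAt_id x).prodMk ((hasDerivAt_const x y).prodMk (hasDerivAt_const x t)))).deriv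

theorem eqOn_pdY (hu : DifferentiableOn ℝ (uncurry3 u) Omega) :
    EqOn (uncurry3 (pdY u)) (fun q => fderiv ℝ (uncurry3 u) q (0, 1, 0)) Omega := by
  rintro ⟨x, y, t⟩ ⟨hx, hy⟩
  exact ((hu.differentiableAt (isOpen_Omega.mem_nhds ⟨hx, hy⟩)).hasFDerivAt.comp_hasDerivAt y
    ((hasDerivAt_const y x).prodMk ((hasDerivAt_id y).prodMk (hasDerivAt_const y t)))).deriv

theorem eqOn_pdT (hu : DifferentiableOn ℝ (uncurry3 u) Omega) :
    EqOn (uncurry3 (pdT u)) (fun q => fderiv ℝ (uncurry3 u) q (0, 0, 1)) Omega := by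
  rintro ⟨x, y, t⟩ ⟨hx, hy⟩
  exact ((hu.differentiableAt (isOpen_Omega.mem_nhds ⟨hx, hy⟩)).hasFDerivAt.comp_hasDerivAt t
    ((hasDerivAt_const t x).prodMk ((hasDerivAt_const t y).prodMk (hasDerivAt_id t)))).deriv

theorem contDiffOn_pdX {n : ℕ} (hu : ContDiffOn ℝ (n + 1) (uncurry3 u) Omega) :
    ContDiffOn ℝ n (uncurry3 (pdX u)) Omega :=
  hu.of_eqOn_fderiv_apply isOpen_Omega (eqOn_pdX (hu.differentiableOn (by simp)))

theorem contDiffOn_pdY {n : ℕ} (hu : ContDiffOn ℝ (n + 1) (uncurry3 u) Omega) :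
    ContDiffOn ℝ n (uncurry3 (pdY u)) Omega :=
  hu.of_eqOn_fderiv_apply isOpen_Omega (eqOn_pdY (hu.differentiableOn (by simp)))

theorem contDiffOn_pdT {n : ℕ} (hu : ContDiffOn ℝ (n + 1) (uncurry3 u) Omega) :
    ContDiffOn ℝ n (uncurry3 (pdT u)) Omega :=
  hu.of_eqOn_fderiv_apply isOpen_Omega (eqOn_pdT (hu.differentiableOn (by simp)))

theorem pdY_pdX_comm (hu : ContDiffOn ℝ 2 (uncurry3 u) Omega) (hx : 0 < x) (hy : 0 < y) :
    pdY (pdX u) x y t = pdX (pdY u) x y t := by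
  have hp : ((x, y, t) : ℝ × ℝ × ℝ) ∈ Omega := ⟨hx, hy⟩
  have hu₁ := hu.differentiableOn two_ne_zero
  calc pdY (pdX u) x y t = fderiv ℝ (uncurry3 (pdX u)) (x, y, t) (0, 1, 0) :=
        eqOn_pdY ((contDiffOn_pdX (n := 1) hu).differentiableOn one_ne_zero) hp
    _ = fderiv ℝ (uncurry3 (pdY u)) (x, y, t) (1, 0, 0) :=
        fderiv_apply_comm_of_eqOn_fderiv_apply hu isOpen_Omega hp (eqOn_pdX hu₁)
          (eqOn_pdY hu₁)
    _ = pdX (pdY u) x y t :=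
        (eqOn_pdX ((contDiffOn_pdY (n := 1) hu).differentiableOn one_ne_zero) hp).symm

theorem pdT_pdX_comm (hu : ContDiffOn ℝ 2 (uncurry3 u) Omega) (hx : 0 < x) (hy : 0 < y) :
    pdT (pdX u) x y t = pdX (pdT u) x y t := by
  have hp : ((x, y, t) : ℝ × ℝ × ℝ) ∈ Omega := ⟨hx, hy⟩
  have hu₁ := hu.differentiableOn two_ne_zero
  calc pdT (pdX u) x y t = fderiv ℝ (uncurry3 (pdX u)) (x, y, t) (0, 0, 1) :=
        eqOn_pdT ((contDiffOn_pdX (n := 1) hu).differentiableOn one_ne_zero) hp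
    _ = fderiv ℝ (uncurry3 (pdT u)) (x, y, t) (1, 0, 0) :=
        fderiv_apply_comm_of_eqOn_fderiv_apply hu isOpen_Omega hp (eqOn_pdX hu₁)
          (eqOn_pdT hu₁)
    _ = pdX (pdT u) x y t :=
        (eqOn_pdX ((contDiffOn_pdT (n := 1) hu).differentiableOn one_ne_zero) hp).symm

theorem pdY_congr {v : ℝ → ℝ → ℝ → ℝ}
    (h : ∀ x y t, 0 < x → 0 < y → u x y t = v x y t)
    (hx : 0 < x) (hy : 0 < y) : pdY u x y t = pdY v x y t :=
  Filter.EventuallyEq.deriv_eq <| by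
    filter_upwards [eventually_gt_nhds hy] with z hz using h x z t hx hz

theorem pdXX_eq_pdX_pdX : pdXX u = pdX (pdX u) := rfl

theorem pdYY_eq_pdY_pdY : pdYY u = pdY (pdY u) := rfl

theorem pdYY_pdX_comm (hu : ContDiffOn ℝ 3 (uncurry3 u) Omega) (hx : 0 < x) (hy : 0 < y) :
    pdYY (pdX u) x y t = pdX (pdYY u) x y t := by
  have hu₂ : ContDiffOn ℝ 2 (uncurry3 u) Omega := hu.of_le (by norm_num)
  calc pdYY (pdX u) x y t = pdY (pdX (pdY u)) x y t :=
        pdY_congr (fun x y t hx hy => pdY_pdX_comm hu₂ hx hy) hx hy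
    _ = pdX (pdYY u) x y t := pdY_pdX_comm (contDiffOn_pdY (n := 2) hu) hx hy

theorem pdT_pdX_of_lsEq {a b d e : ℝ} (hu : ContDiffOn ℝ 3 (uncurry3 u) Omega)
    (heq : ∀ x y t : ℝ, 0 < x → 0 < y → LSEq a b d e u x y t) (hx : 0 < x) (hy : 0 < y) :
    pdT (pdX u) x y t = b * pdX u x y t -
      ((a + 1 / 2 - b * x) * pdX (pdX u) x y t + (d - e * y) * pdY (pdX u) x y t +
        x / 2 * pdXX (pdX u) x y t + y / 2 * pdYY (pdX u) x y t) := by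
  have hu₂ : ContDiffOn ℝ 2 (uncurry3 u) Omega := hu.of_le (by norm_num)
  have hux : ContDiffOn ℝ 2 (uncurry3 (pdX u)) Omega := contDiffOn_pdX hu
  have huy : ContDiffOn ℝ 2 (uncurry3 (pdY u)) Omega := contDiffOn_pdY hu
  have hdiff {v : ℝ → ℝ → ℝ → ℝ} (hv : ContDiffOn ℝ 1 (uncurry3 v) Omega) :
      HasDerivAt (fun z => v z y t) (pdX v x y t) x :=
    hasDerivAt_pdX (hv.differentiableOn one_ne_zero) hx hy
  have hdx : HasDerivAt (fun z => pdT u z y t)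
      (-((-b) * pdX u x y t + (a - b * x) * pdXX u x y t + (d - e * y) * pdX (pdY u) x y t +
        (1 / 2 * pdXX u x y t + x / 2 * pdX (pdXX u) x y t) + y / 2 * pdX (pdYY u) x y t)) x := by
    have hA := (((hasDerivAt_id x).const_mul b).const_sub a).mul (hdiff (hux.of_le one_le_two))
    have hB := (hdiff (huy.of_le one_le_two)).const_mul (d - e * y)
    have hC := ((hasDerivAt_id x).div_const 2).mul (hdiff (contDiffOn_pdX (n := 1) hux))
    have hD := (hdiff (contDiffOn_pdY (n := 1) huy)).const_mul (y / 2)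
    refine ((((hA.add hB).add hC).add hD).neg.congr_of_eventuallyEq ?_).congr_deriv ?_
    · filter_upwards [eventually_gt_nhds hx] with z hz using heq z y t hz hy
    · simp only [pdXX_eq_pdX_pdX, pdYY_eq_pdY_pdY, id_eq]
      ring
  calc pdT (pdX u) x y t = pdX (pdT u) x y t := pdT_pdX_comm hu₂ hx hy
    _ = _ := hdx.deriv
    _ = _ := by
      rw [← pdY_pdX_comm hu₂ hx hy, ← pdYY_pdX_comm hu hx hy]
      simp only [pdXX_eq_pdX_pdX]
      ring

end Coordinates

noncomputable def expSqrtMul (b : ℝ) (v : ℝ → ℝ → ℝ → ℝ) (x y t : ℝ) : ℝ :=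
  Real.exp (-(b * t) / 2) * Real.sqrt x * v x y t

section ExpSqrtMul

open Real

variable {b : ℝ} {v : ℝ → ℝ → ℝ → ℝ} {x y t : ℝ}

theorem contDiffOn_expSqrtMul {n : WithTop ℕ∞} (hv : ContDiffOn ℝ n (uncurry3 v) Omega) :
    ContDiffOn ℝ n (uncurry3 (expSqrtMul b v)) Omega := by
  have hexp : ContDiff ℝ n (fun p : ℝ × ℝ × ℝ => exp (-(b * p.2.2) / 2)) := by fun_prop
  have hsqrt : ContDiffOn ℝ n (fun p : ℝ × ℝ × ℝ => √p.1) Omega :=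
    contDiffOn_fst.sqrt fun p hp => hp.1.ne'
  exact (hexp.contDiffOn.mul hsqrt).mul hv

theorem pdX_expSqrtMul (hv : DifferentiableOn ℝ (uncurry3 v) Omega) (hx : 0 < x) (hy : 0 < y) :
    pdX (expSqrtMul b v) x y t =
      exp (-(b * t) / 2) * ((2 * √x)⁻¹ * v x y t + √x * pdX v x y t) :=
  ((((hasDerivAt_sqrt hx.ne').const_mul _).mul (hasDerivAt_pdX hv hx hy)).deriv).trans (by ring)

theorem pdXX_expSqrtMul (hv : ContDiffOn ℝ 2 (uncurry3 v) Omega) (hx : 0 < x) (hy : 0 < y) :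
    pdXX (expSqrtMul b v) x y t =
      exp (-(b * t) / 2) *
        (-(4 * √x ^ 3)⁻¹ * v x y t + (√x)⁻¹ * pdX v x y t + √x * pdXX v x y t) := by
  have hv₁ := hv.differentiableOn two_ne_zero
  have hvx := (contDiffOn_pdX (n := 1) hv).differentiableOn one_ne_zero
  have hs : √x ≠ 0 := (sqrt_pos.2 hx).ne'
  have hinv := ((hasDerivAt_sqrt hx.ne').const_mul 2).inv (by positivity)
  have h := ((hinv.mul (hasDerivAt_pdX (t := t) hv₁ hx hy)).add
    ((hasDerivAt_sqrt hx.ne').mul (hasDerivAt_pdX (t := t) hvx hx hy))).const_mul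
      (exp (-(b * t) / 2))
  refine ((h.congr_of_eventuallyEq ?_).deriv).trans ?_
  · filter_upwards [eventually_gt_nhds hx] with z hz using pdX_expSqrtMul hv₁ hz hy
  · simp only [Pi.inv_apply, pdXX_eq_pdX_pdX]
    field_simp
    ring

theorem pdY_expSqrtMul (hv : DifferentiableOn ℝ (uncurry3 v) Omega) (hx : 0 < x) (hy : 0 < y) :
    pdY (expSqrtMul b v) x y t = exp (-(b * t) / 2) * √x * pdY v x y t :=
  ((hasDerivAt_pdY hv hx hy).const_mul _).deriv

theorem pdYY_expSqrtMul (hv : ContDiffOn ℝ 2 (uncurry3 v) Omega) (hx : 0 < x) (hy : 0 < y) :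
    pdYY (expSqrtMul b v) x y t = exp (-(b * t) / 2) * √x * pdYY v x y t := by
  have hv₁ := hv.differentiableOn two_ne_zero
  have hvy := (contDiffOn_pdY (n := 1) hv).differentiableOn one_ne_zero
  refine ((hasDerivAt_pdY hvy hx hy).const_mul _).congr_of_eventuallyEq ?_ |>.deriv
  filter_upwards [eventually_gt_nhds hy] with z hz using pdY_expSqrtMul hv₁ hx hz

theorem pdT_expSqrtMul (hv : DifferentiableOn ℝ (uncurry3 v) Omega) (hx : 0 < x) (hy : 0 < y) :
    pdT (expSqrtMul b v) x y t = exp (-(b * t) / 2) * √x * (pdT v x y t - b / 2 * v x y t) := by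
  have hexp : HasDerivAt (fun s => exp (-(b * s) / 2)) (exp (-(b * t) / 2) * (-b / 2)) t :=
    (((hasDerivAt_id t).const_mul b).neg.div_const 2).exp.congr_deriv (by simp)
  exact (((hexp.mul_const _).mul (hasDerivAt_pdT hv hx hy)).deriv).trans (by ring)

theorem lsEq_expSqrtMul {d e : ℝ} (hv : ContDiffOn ℝ 2 (uncurry3 v) Omega) (hx : 0 < x)
    (hy : 0 < y) (hvt : pdT v x y t = b * v x y t -
      ((3 / 4 - b * x) * pdX v x y t + (d - e * y) * pdY v x y t +
        x / 2 * pdXX v x y t + y / 2 * pdYY v x y t)) :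
    LSEq (1 / 4) b d e (expSqrtMul b v) x y t := by
  have hv₁ := hv.differentiableOn two_ne_zero
  unfold LSEq
  rw [pdT_expSqrtMul hv₁ hx hy, pdX_expSqrtMul hv₁ hx hy, pdY_expSqrtMul hv₁ hx hy,
    pdXX_expSqrtMul hv hx hy, pdYY_expSqrtMul hv hx hy, hvt]
  obtain ⟨s, hs, rfl⟩ : ∃ s, 0 < s ∧ s ^ 2 = x := ⟨√x, sqrt_pos.2 hx, sq_sqrt hx.le⟩
  rw [sqrt_sq hs.le]
  field_simp
  ring

end ExpSqrtMul

/-- Infinitesimal symmetry action (`v₄ = √x e^{-bt/2} ∂/∂x` on solutions) when `a = 1/4`: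
if `u` is a C³ solution of the Longstaff–Schwartz equation on `Ω`, then
`w(x,y,t) = e^{-bt/2} · √x · u_x(x,y,t)` is also a solution on `Ω`. -/
theorem ls_mu2_is_solution (a b d e : ℝ) (ha : a = 1 / 4)
    (u : ℝ → ℝ → ℝ → ℝ)
    (hu : ContDiffOn ℝ 3 (fun p : ℝ × ℝ × ℝ => u p.1 p.2.1 p.2.2) Omega)
    (heq : ∀ x y t : ℝ, 0 < x → 0 < y → LSEq a b d e u x y t) :
    IsLSSolution a b d e
      (fun x y t => Real.exp (-(b * t) / 2) * Real.sqrt x * pdX u x y t) := by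
  subst ha
  have hv : ContDiffOn ℝ 2 (uncurry3 (pdX u)) Omega := contDiffOn_pdX hu
  refine ⟨contDiffOn_expSqrtMul hv, fun x y t hx hy => lsEq_expSqrtMul hv hx hy ?_⟩
  rw [pdT_pdX_of_lsEq hu heq hx hy]
  ring
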